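/- Splitting a task into set/get operations yields a sequential object consistent with the task: Let T = (I, O, Δ) be a task and let O_T be the sequential object whose states are the pairs (σ, τ) with σ ∈ I and τ ∈ Δ(σ), with initial state (∅, ∅), with operation set(p_i, in_i) taking state (σ, τ) to (σ ∪ {(p_i, in_i)}, τ) and returning OK whenever σ ∪ {(p_i, in_i)} ∈ I and (σ ∪ {(p_i, in_i)}, τ) is a state, and operation get(p_i) taking state (σ, τ) to (σ, τ ∪ {(p_i, out_i)}) and returning out_i whenever τ ∪ {(p_i, out_i)} ∈ Δ(σ). Then for every sequential execution Ŝ of O_T (starting from the initial state), τ_Ŝ ∈ Δ(σ_Ŝ), where σ_Ŝ is the input simplex of all pairs (p_i, in_i) set in Ŝ and τ_Ŝ is the output simplex of all pairs (p_i, out_i) returned by get operations in Ŝ. -/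
import Mathlib


/-! ## One-shot executions, interval-sequential objects, interval-linearizability, tasks -/

/-- An event: an invocation of the (single) operation by a process with an input value,
or a response to a process with an output value. -/
inductive Ev (Proc In Out : Type) where
  | inv (p : Proc) (x : In)
  | res (p : Proc) (y : Out)
deriving DecidableEq

namespace Ev

variable {Proc In Out : Type}

/-- The process issuing/receiving the event. -/
def proc : Ev Proc In Out → Proc
  | .inv p _ => p
  | .res p _ => p

/-- Is the event an invocation? -/
def isInv : Ev Proc In Out → Bool
  | .inv _ _ => true
  | _ => false

/-- Is the event a response? -/
def isRes : Ev Proc In Out → Bool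
  | .res _ _ => true
  | _ => false

end Ev

variable {Proc In Out : Type} [DecidableEq Proc] [DecidableEq In] [DecidableEq Out]

/-- Projection of an execution (a finite sequence of events) onto a process. -/
def projP (E : List (Ev Proc In Out)) (p : Proc) : List (Ev Proc In Out) :=
  E.filter (fun e => decide (e.proc = p))

/-- A well-formed one-shot execution: each process's subsequence is empty, a single
invocation, or an invocation followed by its matching response. -/
def OneShotWF (E : List (Ev Proc In Out)) : Prop :=
  ∀ p : Proc,
    projP E p = [] ∨ (∃ x, projP E p = [Ev.inv p x]) ∨
      ∃ x y, projP E p = [Ev.inv p x, Ev.res p y]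

/-- `comp E`: the execution `E` with its pending invocations removed. -/
def comp (E : List (Ev Proc In Out)) : List (Ev Proc In Out) :=
  E.filter (fun e => e.isRes || E.any (fun e' => e'.isRes && decide (e'.proc = e.proc)))

/-- `Ebar` extends `E` by appending zero or more matching responses to pending
invocations (well-formedness of `Ebar` forces the appended responses to match). -/
def Extension (E Ebar : List (Ev Proc In Out)) : Prop :=
  OneShotWF Ebar ∧ ∃ F, Ebar = E ++ F ∧ ∀ e ∈ F, e.isRes = true

/-- Real-time precedence between the (one-shot) operation calls of processes `p` and `q`
in an execution: the response of `p` occurs before the invocation of `q`. -/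
def Prec (E : List (Ev Proc In Out)) (p q : Proc) : Prop :=
  ∃ (i j : ℕ) (y : Out) (x : In),
    i < j ∧ E[i]? = some (Ev.res p y) ∧ E[j]? = some (Ev.inv q x)

/-- An invoking concurrency class: a nonempty finite set of invocations,
at most one per process. -/
def InvClass (C : Finset (Ev Proc In Out)) : Prop :=
  C.Nonempty ∧ (∀ e ∈ C, e.isInv = true) ∧
    ∀ e ∈ C, ∀ e' ∈ C, e.proc = e'.proc → e = e'

/-- A responding concurrency class: a nonempty finite set of responses,
at most one per process. -/
def ResClass (C : Finset (Ev Proc In Out)) : Prop :=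
  C.Nonempty ∧ (∀ e ∈ C, e.isRes = true) ∧
    ∀ e ∈ C, ∀ e' ∈ C, e.proc = e'.proc → e = e'

/-- An interval-sequential execution `I₀,R₀,I₁,R₁,…,I_m,R_m`, represented as a flat
list of concurrency classes: classes at even positions are invoking, classes at odd
positions are responding, and every response matches an invocation in an earlier
(or simultaneous-round) invoking class with no further invocation by the same
process in between. -/
def IsISExec (h : List (Finset (Ev Proc In Out))) : Prop :=
  h.length % 2 = 0 ∧
  (∀ k C, h[k]? = some C → if k % 2 = 0 then InvClass C else ResClass C) ∧
  (∀ i C r, h[i]? = some C → i % 2 = 1 → r ∈ C →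
    ∃ j, j ≤ i ∧ j % 2 = 0 ∧
      (∃ D, h[j]? = some D ∧ ∃ e ∈ D, e.isInv = true ∧ e.proc = r.proc) ∧
      ∀ j' D', j < j' → j' ≤ i → j' % 2 = 0 → h[j']? = some D' →
        ∀ e ∈ D', e.isInv = true → e.proc ≠ r.proc)

/-- An interval-sequential object: a Mealy automaton whose transitions, from a state
and a (nonempty) invoking concurrency class, produce a (nonempty) responding
concurrency class and a next state; the response uniquely determines the new state. -/
structure ISObject (Proc In Out : Type) where
  State : Type
  init : Set State
  δ : State → Finset (Ev Proc In Out) → Set (Finset (Ev Proc In Out) × State)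
  valid : ∀ q I R q', (R, q') ∈ δ q I → InvClass I ∧ ResClass R
  det : ∀ q I R q1 q2, (R, q1) ∈ δ q I → (R, q2) ∈ δ q I → q1 = q2

/-- The interval-sequential specification of an object: all interval-sequential
executions generated from an initial state by the transition relation. -/
def ISS (O : ISObject Proc In Out) : Set (List (Finset (Ev Proc In Out))) :=
  { h | IsISExec h ∧ ∃ q : ℕ → O.State, q 0 ∈ O.init ∧
      ∀ i I R, h[2*i]? = some I → h[2*i+1]? = some R →
        (R, q (i+1)) ∈ O.δ (q i) I }

/-- Projection of an interval-sequential execution onto a process `p`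
(each class contains at most one event of `p`). -/
noncomputable def projPIS (h : List (Finset (Ev Proc In Out))) (p : Proc) : List (Ev Proc In Out) :=
  h.flatMap (fun C => (C.filter (fun e => e.proc = p)).toList)

/-- The interval-sequential execution `h` respects the real-time order of `Ecomp`:
whenever the operation of `p` precedes that of `q`, every class containing an event
of `p` comes before every class containing an event of `q`. -/
def Respects (Ecomp : List (Ev Proc In Out)) (h : List (Finset (Ev Proc In Out))) : Prop :=
  ∀ p q, Prec Ecomp p q →
    ∀ (k l : ℕ) (C D : Finset (Ev Proc In Out)), h[k]? = some C → h[l]? = some D →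
      (∃ e ∈ C, e.proc = p) → (∃ e ∈ D, e.proc = q) → k < l

/-- `E` is interval-linearizable with respect to the object `O`. -/
def IntervalLin (O : ISObject Proc In Out) (E : List (Ev Proc In Out)) : Prop :=
  ∃ Ebar h, Extension E Ebar ∧ h ∈ ISS O ∧
    (∀ p, projP (comp Ebar) p = projPIS h p) ∧
    Respects (comp Ebar) h

/-- A task `(I, O, Δ)`: pure chromatic `(n-1)`-dimensional input and output complexes
together with a carrier map `Δ`. -/
structure DTask (Proc In Out : Type) [DecidableEq Proc] [DecidableEq In]
    [DecidableEq Out] [Fintype Proc] where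
  I : Set (Finset (Proc × In))
  O : Set (Finset (Proc × Out))
  Δ : Finset (Proc × In) → Set (Finset (Proc × Out))
  I_nonempty : I.Nonempty
  I_down : ∀ σ ∈ I, ∀ σ' ⊆ σ, σ' ∈ I
  O_down : ∀ τ ∈ O, ∀ τ' ⊆ τ, τ' ∈ O
  I_chromatic : ∀ σ ∈ I, ∀ v ∈ σ, ∀ w ∈ σ, (v : Proc × In).1 = w.1 → v = w
  O_chromatic : ∀ τ ∈ O, ∀ v ∈ τ, ∀ w ∈ τ, (v : Proc × Out).1 = w.1 → v = w
  I_pure : ∀ σ ∈ I, ∃ σ' ∈ I, σ ⊆ σ' ∧ σ'.card = Fintype.card Proc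
  O_pure : ∀ τ ∈ O, ∃ τ' ∈ O, τ ⊆ τ' ∧ τ'.card = Fintype.card Proc
  Δ_sub : ∀ σ ∈ I, Δ σ ⊆ O
  Δ_nonempty : ∀ σ ∈ I, (Δ σ).Nonempty
  Δ_down : ∀ σ ∈ I, ∀ τ ∈ Δ σ, ∀ τ' ⊆ τ, τ' ∈ Δ σ
  Δ_pure : ∀ σ ∈ I, ∀ τ ∈ Δ σ, ∃ τ' ∈ Δ σ, τ ⊆ τ' ∧ τ'.card = σ.card
  Δ_ids : ∀ σ ∈ I, ∀ τ ∈ Δ σ, τ.card = σ.card →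
    τ.image Prod.fst = σ.image Prod.fst
  Δ_mono : ∀ σ ∈ I, ∀ σ' ⊆ σ, Δ σ' ⊆ Δ σ

/-- `σ_E`: the input simplex of all invocations of an execution. -/
def inputSimplex (E : List (Ev Proc In Out)) : Finset (Proc × In) :=
  (E.filterMap (fun e => match e with | .inv p x => some (p, x) | _ => none)).toFinset

/-- `τ_E`: the output simplex of all responses of an execution. -/
def outputSimplex (E : List (Ev Proc In Out)) : Finset (Proc × Out) :=
  (E.filterMap (fun e => match e with | .res p y => some (p, y) | _ => none)).toFinset

/-- `E` satisfies the task `T`: for every prefix `E'` of `E`, `τ_{E'} ∈ Δ(σ_{E'})`. -/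
def Satisfies [Fintype Proc] (T : DTask Proc In Out) (E : List (Ev Proc In Out)) : Prop :=
  ∀ k, outputSimplex (E.take k) ∈ T.Δ (inputSimplex (E.take k))

/-! ## Statement: splitting a task into set/get operations -/

/-- The steps of the sequential object `O_T` obtained from a task by splitting its
operation into `set` (depositing an input) and `get` (returning an output). -/
inductive SGStep (Proc In Out : Type) where
  | set (p : Proc) (x : In)
  | get (p : Proc) (y : Out)
deriving DecidableEq

namespace SGStep
variable {Proc In Out : Type}
/-- The process performing the step. -/
def proc : SGStep Proc In Out → Proc
  | .set p _ => p
  | .get p _ => p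
end SGStep

variable {Proc In Out : Type} [DecidableEq Proc] [DecidableEq In] [DecidableEq Out]
  [Fintype Proc]

/-- A run of the sequential object `O_T`: states are pairs `(σ, τ)` with `σ ∈ I` and
`τ ∈ Δ(σ)`; `set(p,x)` moves `(σ, τ)` to `(σ ∪ {(p,x)}, τ)` (returning OK) whenever
`σ ∪ {(p,x)} ∈ I` and the new pair is a state; `get(p) : y` moves `(σ, τ)` to
`(σ, τ ∪ {(p,y)})` whenever `τ ∪ {(p,y)} ∈ Δ(σ)`. -/
inductive SGRun (T : DTask Proc In Out) :
    Finset (Proc × In) × Finset (Proc × Out) → List (SGStep Proc In Out) →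
    Finset (Proc × In) × Finset (Proc × Out) → Prop
  | nil (s : Finset (Proc × In) × Finset (Proc × Out)) : SGRun T s [] s
  | set {σ τ s' L} (p : Proc) (x : In) :
      insert (p, x) σ ∈ T.I → τ ∈ T.Δ (insert (p, x) σ) →
      SGRun T (insert (p, x) σ, τ) L s' →
      SGRun T (σ, τ) (SGStep.set p x :: L) s'
  | get {σ τ s' L} (p : Proc) (y : Out) :
      insert (p, y) τ ∈ T.Δ σ →
      SGRun T (σ, insert (p, y) τ) L s' →
      SGRun T (σ, τ) (SGStep.get p y :: L) s'

/-- Projection of a list of steps onto a process. -/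
def sgProj (L : List (SGStep Proc In Out)) (p : Proc) : List (SGStep Proc In Out) :=
  L.filter (fun s => decide (s.proc = p))

/-- In a sequential execution of `O_T`, each process performs `set` at most once and
`get` at most once, with its `set` before its `get`. -/
def SGWF (L : List (SGStep Proc In Out)) : Prop :=
  ∀ p : Proc,
    sgProj L p = [] ∨ (∃ x, sgProj L p = [SGStep.set p x]) ∨
      ∃ x y, sgProj L p = [SGStep.set p x, SGStep.get p y]

/-- `σ_Ŝ`: the input simplex of all pairs `(p, x)` set in the execution. -/
def sgInput (L : List (SGStep Proc In Out)) : Finset (Proc × In) :=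
  (L.filterMap (fun s => match s with | .set p x => some (p, x) | _ => none)).toFinset

/-- `τ_Ŝ`: the output simplex of all pairs `(p, y)` returned by `get` operations. -/
def sgOutput (L : List (SGStep Proc In Out)) : Finset (Proc × Out) :=
  (L.filterMap (fun s => match s with | .get p y => some (p, y) | _ => none)).toFinset

lemma sgRun_invariant (T : DTask Proc In Out) :
    ∀ {s : Finset (Proc × In) × Finset (Proc × Out)} {L s'},
    SGRun T s L s' → s.2 ∈ T.Δ s.1 →
      s'.2 ∈ T.Δ s'.1 ∧ s'.1 = s.1 ∪ sgInput L ∧ s'.2 = s.2 ∪ sgOutput L := by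
  intro s L s' hrun
  induction hrun with
  | nil s => intro h; refine ⟨h, ?_, ?_⟩ <;> simp [sgInput, sgOutput]
  | set p x hI hΔ hrun ih =>
      intro _
      obtain ⟨h1, h2, h3⟩ := ih hΔ
      refine ⟨h1, ?_, ?_⟩
      · rw [h2]; simp only [sgInput, List.filterMap_cons, List.toFinset_cons]
        ext v; simp [Finset.mem_insert, Finset.mem_union]
      · rw [h3]; simp [sgOutput]
  | get p y hΔ hrun ih =>
      intro _
      obtain ⟨h1, h2, h3⟩ := ih hΔ
      refine ⟨h1, ?_, ?_⟩
      · rw [h2]; simp [sgInput]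
      · rw [h3]; simp only [sgOutput, List.filterMap_cons, List.toFinset_cons]
        ext v; simp [Finset.mem_insert, Finset.mem_union]

/-- **Splitting a task into set/get operations yields a sequential object consistent
with the task.** For every sequential execution `Ŝ` of the object `O_T` starting from
the initial state `(∅, ∅)`, `τ_Ŝ ∈ Δ(σ_Ŝ)`. -/
theorem split_task_object_consistent (T : DTask Proc In Out)
    (L : List (SGStep Proc In Out)) (s' : Finset (Proc × In) × Finset (Proc × Out))
    (hrun : SGRun T (∅, ∅) L s') (hwf : SGWF L) :
    sgOutput L ∈ T.Δ (sgInput L) := by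
  have hIempty : (∅ : Finset (Proc × In)) ∈ T.I := by
    obtain ⟨σ, hσ⟩ := T.I_nonempty
    exact T.I_down σ hσ ∅ (Finset.empty_subset σ)
  have hΔempty : (∅ : Finset (Proc × Out)) ∈ T.Δ ∅ := by
    obtain ⟨τ, hτ⟩ := T.Δ_nonempty ∅ hIempty
    exact T.Δ_down ∅ hIempty τ hτ ∅ (Finset.empty_subset τ)
  obtain ⟨h1, h2, h3⟩ := sgRun_invariant T hrun hΔempty
  simp only [Finset.empty_union] at h2 h3
  rw [← h2, ← h3]; exact h1
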